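/- arXiv:0710.5380 — 2 statements merged into one kernel-verified Lean document; each statement's English description precedes it below -/
import Mathlib

section
/- Durrett's bound for 2N-dependent oriented percolation (Theorem 3.2): Let N ∈ ℕ and θ ∈ (0, 1), and let (ω(x, n))_{(x,n)∈𝓛} be a family of {0,1}-valued random variables that is 2N-dependent with density at least 1 − θ. Define the open cluster of the origin C₀ = {(y, n) ∈ 𝓛 : (0, 0) → (y, n)}. If θ ≤ 6^{−4(4N+1)²}, then P[|C₀| < ∞] ≤ 55 θ^{1/(4N+1)²}, and moreover 55 θ^{1/(4N+1)²} ≤ 1/20. -/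
/-!
Write the sites of `𝓛` as `(x, n) = (u - v, u + v)`, so that the oriented bonds become the unit
steps `(1, 0)` and `(0, 1)` of `ℤ²`. If the origin is open and its cluster `C` is finite, walk
along the boundary of `C` (as a set of unit squares), starting with the edge between `(0, 0)` and
`(0, -1)`. Each step is one of three moves, and the walk is injective on boundary edges, so it is
periodic; let `l` be its period. The rear corner of the current edge advances by the heading at
each step, so the headings sum to zero over a period. This forces `l ≥ 4` and exactly `l / 2`
steps whose outer cell sits on a bond out of `C`; those outer cells are closed sites, at least
`l / 4` of them, and a `(4N + 1)⁻²`-fraction of them is `2N`-separated. Hence the event that a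
given sequence of `l - 1` moves occurs has probability at most `z ^ l`, where
`z = θ ^ (1 / (4 (4N + 1)²))`, and summing over the `3 ^ (l - 1)` sequences gives
`P[|C| < ∞] ≤ θ + ∑_{l ≥ 4} 3 ^ (l - 1) z ^ l ≤ θ + 54 z ^ 4 ≤ 55 θ ^ (1 / (4N + 1)²)`.
-/

open MeasureTheory Filter
open scoped ENNReal

/-- `(x, m) → (y, n)`: there is an open oriented path in the percolation structure
given by the open-site events `op`. -/
def Reaches {Ω : Type*} (op : ℤ → ℕ → Set Ω) (ω : Ω) (x : ℤ) (m : ℕ) (y : ℤ) (n : ℕ) : Prop :=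
  ∃ f : ℕ → ℤ, f m = x ∧ f n = y ∧
    (∀ k, m < k → k ≤ n → f k - f (k - 1) = 1 ∨ f k - f (k - 1) = -1) ∧
    (∀ k, m ≤ k → k ≤ n → ω ∈ op (f k) k)

/-- The family of open-site events `op` (indexed by the sites of
`𝓛 = {(x, n) : x + n even}`) is `2N`-dependent with density at least `1 - θ`:
for any finite set `I` of sites of `𝓛` whose pairwise `ℓ∞`-distances all exceed `2N`,
`P[all sites of I are closed] ≤ θ^{|I|}`. -/
def TwoNDependentDensity {Ω : Type*} {m0 : MeasurableSpace Ω} (P : Measure Ω)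
    (N : ℕ) (θ : ℝ) (op : ℤ → ℕ → Set Ω) : Prop :=
  ∀ I : Finset (ℤ × ℕ),
    (∀ p ∈ I, Even (p.1 + (p.2 : ℤ))) →
    (∀ p ∈ I, ∀ q ∈ I, p ≠ q →
      (2 * N : ℤ) < max |p.1 - q.1| |(p.2 : ℤ) - (q.2 : ℤ)|) →
    P (⋂ p ∈ I, (op p.1 p.2)ᶜ) ≤ ENNReal.ofReal (θ ^ I.card)

open Function Set in
theorem Set.MapsTo.mem_periodicPts {α : Type*} {f : α → α} {s : Set α} (hf : MapsTo f s s)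
    (hs : s.Finite) (hinj : InjOn f s) {x : α} (hx : x ∈ s) : x ∈ periodicPts f := by
  have := hs.to_subtype
  obtain ⟨n, hn, hper⟩ := (hf.restrict_inj.mpr hinj).mem_periodicPts ⟨x, hx⟩
  have h := congrArg Subtype.val hper
  rw [hf.coe_iterate_restrict] at h
  exact ⟨n, hn, h⟩

open Finset in
theorem Finset.exists_subset_pairwise_card_le_mul {α : Type*} [DecidableEq α]
    {r : α → α → Prop} [DecidableRel r] (hsymm : ∀ a b, r a b → r b a) (hirrefl : ∀ a, ¬ r a a)
    (S : Finset α) {K : ℕ} (hK : ∀ a ∈ S, #{b ∈ S | ¬ r a b} ≤ K) :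
    ∃ T ⊆ S, (T : Set α).Pairwise r ∧ #S ≤ K * #T := by
  classical
  obtain ⟨T, hT, hmax⟩ :=
    (S.powerset.filter fun T : Finset α => (T : Set α).Pairwise r).exists_maximal ⟨∅, by simp⟩
  obtain ⟨hTS, hTr⟩ : T ⊆ S ∧ (T : Set α).Pairwise r := by simpa using hT
  have hcover : S ⊆ T.biUnion fun t => {b ∈ S | ¬ r t b} := by
    intro s hs
    by_cases hsT : s ∈ T
    · exact mem_biUnion.mpr ⟨s, hsT, mem_filter.mpr ⟨hs, hirrefl s⟩⟩
    by_contra hfar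
    have hins : insert s T ∈ S.powerset.filter fun T : Finset α => (T : Set α).Pairwise r := by
      simp only [mem_filter, mem_powerset, coe_insert, Set.pairwise_insert]
      simp only [mem_biUnion, mem_filter, not_exists, not_and, hs, true_and, not_not] at hfar
      exact ⟨insert_subset hs hTS, hTr, fun t ht _ => ⟨hsymm _ _ (hfar t ht), hfar t ht⟩⟩
    exact hsT (hmax hins (subset_insert _ _) (mem_insert_self _ _))
  refine ⟨T, hTS, hTr, ?_⟩
  calc #S ≤ #(T.biUnion fun t => {b ∈ S | ¬ r t b}) := card_le_card hcover
    _ ≤ ∑ t ∈ T, #{b ∈ S | ¬ r t b} := card_biUnion_le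
    _ ≤ ∑ _t ∈ T, K := sum_le_sum fun t ht => hK t (hTS ht)
    _ = K * #T := by rw [sum_const, smul_eq_mul, mul_comm]

namespace OrientedPercolation

section BoundaryWalk

open Finset

def dirs : Finset (ℤ × ℤ) := {(1, 0), (0, 1), (-1, 0), (0, -1)}

def ups : Finset (ℤ × ℤ) := {(1, 0), (0, 1)}

def rot (w : ℤ × ℤ) : ℤ × ℤ := (w.2, -w.1)

lemma rot_mem_dirs : ∀ w ∈ dirs, rot w ∈ dirs := by decide

lemma neg_mem_dirs : ∀ w ∈ dirs, -w ∈ dirs := by decide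

def IsBoundaryEdge (F : Set (ℤ × ℤ)) (s : (ℤ × ℤ) × (ℤ × ℤ)) : Prop :=
  s.2 - s.1 ∈ dirs ∧ s.1 ∈ F ∧ s.2 ∉ F

def turn (s : (ℤ × ℤ) × (ℤ × ℤ)) : ℤ × ℤ := rot (s.2 - s.1)

/-- The three edges that can follow `s = (a, b)` on a walk along the boundary heading in
direction `turn s`: turn around `a`, go straight, or turn around `b`. -/
def step (s : (ℤ × ℤ) × (ℤ × ℤ)) (j : Fin 3) : (ℤ × ℤ) × (ℤ × ℤ) :=
  ![(s.1, s.1 + turn s), (s.1 + turn s, s.2 + turn s), (s.2 + turn s, s.2)] j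

open Classical in
noncomputable def choice (F : Set (ℤ × ℤ)) (s : (ℤ × ℤ) × (ℤ × ℤ)) : Fin 3 :=
  if s.1 + turn s ∉ F then 0 else if s.2 + turn s ∉ F then 1 else 2

noncomputable def next (F : Set (ℤ × ℤ)) (s : (ℤ × ℤ) × (ℤ × ℤ)) : (ℤ × ℤ) × (ℤ × ℤ) :=
  step s (choice F s)

open Classical in
noncomputable def prev (F : Set (ℤ × ℤ)) (s : (ℤ × ℤ) × (ℤ × ℤ)) : (ℤ × ℤ) × (ℤ × ℤ) :=
  if s.1 - turn s ∉ F then (s.1, s.1 - turn s)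
  else if s.2 - turn s ∈ F then (s.2 - turn s, s.2) else (s.1 - turn s, s.2 - turn s)

variable {F : Set (ℤ × ℤ)} {s s₀ : (ℤ × ℤ) × (ℤ × ℤ)}

lemma next_cases (F : Set (ℤ × ℤ)) (s : (ℤ × ℤ) × (ℤ × ℤ)) :
    (s.1 + turn s ∉ F ∧ next F s = (s.1, s.1 + turn s)) ∨
    (s.1 + turn s ∈ F ∧ s.2 + turn s ∉ F ∧ next F s = (s.1 + turn s, s.2 + turn s)) ∨
    (s.1 + turn s ∈ F ∧ s.2 + turn s ∈ F ∧ next F s = (s.2 + turn s, s.2)) := by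
  unfold next choice
  split_ifs <;> simp_all [step]

lemma turn_step (s : (ℤ × ℤ) × (ℤ × ℤ)) :
    turn (s.1, s.1 + turn s) = s.1 - s.2 ∧ turn (s.1 + turn s, s.2 + turn s) = turn s ∧
      turn (s.2 + turn s, s.2) = s.2 - s.1 := by
  refine ⟨?_, ?_, ?_⟩ <;> ext <;> simp [turn, rot]

lemma isBoundaryEdge_next (hs : IsBoundaryEdge F s) : IsBoundaryEdge F (next F s) := by
  obtain ⟨hw, ha, hb⟩ := hs
  have ht : turn s ∈ dirs := rot_mem_dirs _ hw
  rcases next_cases F s with ⟨h0, he⟩ | ⟨h0, h1, he⟩ | ⟨h0, h1, he⟩ <;> rw [he]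
  · exact ⟨by simpa using ht, ha, h0⟩
  · exact ⟨by simpa using hw, h0, h1⟩
  · exact ⟨by simpa using neg_mem_dirs _ ht, h1, hb⟩

lemma prev_next (hs : IsBoundaryEdge F s) : prev F (next F s) = s := by
  obtain ⟨-, ha, hb⟩ := hs
  obtain ⟨ht0, ht1, ht2⟩ := turn_step s
  rcases next_cases F s with ⟨h0, he⟩ | ⟨h0, h1, he⟩ | ⟨h0, h1, he⟩ <;>
    rw [he, prev] <;> dsimp only
  · rw [ht0, sub_sub_cancel]
    simp [hb]
  · rw [ht1, add_sub_cancel_right, add_sub_cancel_right]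
    simp [ha, hb]
  · rw [ht2, sub_sub_cancel, show s.2 + turn s - (s.2 - s.1) = s.1 + turn s by abel]
    simp [h0, ha]

lemma mapsTo_next : Set.MapsTo (next F) {s | IsBoundaryEdge F s} {s | IsBoundaryEdge F s} :=
  fun _ => isBoundaryEdge_next

lemma injOn_next : Set.InjOn (next F) {s | IsBoundaryEdge F s} :=
  fun s hs t ht hst => by rw [← prev_next hs, hst, prev_next ht]

lemma isBoundaryEdge_iterate (hs : IsBoundaryEdge F s) (n : ℕ) :
    IsBoundaryEdge F ((next F)^[n] s) :=
  mapsTo_next.iterate n hs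

lemma finite_setOf_isBoundaryEdge (hF : F.Finite) : {s | IsBoundaryEdge F s}.Finite :=
  ((hF.prod (dirs : Set (ℤ × ℤ)).toFinite).image fun p => (p.1, p.1 + p.2)).subset
    fun s ⟨hw, ha, _⟩ => ⟨(s.1, s.2 - s.1), ⟨ha, hw⟩, by simp⟩

lemma mem_periodicPts_next (hF : F.Finite) (hs : IsBoundaryEdge F s) :
    s ∈ Function.periodicPts (next F) :=
  mapsTo_next.mem_periodicPts (finite_setOf_isBoundaryEdge hF) injOn_next hs

/-- Twice the lattice point at the rear end of the dual edge separating `s.1` from `s.2`. -/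
def corner (s : (ℤ × ℤ) × (ℤ × ℤ)) : ℤ × ℤ := s.1 + s.2 - turn s

lemma corner_next (F : Set (ℤ × ℤ)) (s : (ℤ × ℤ) × (ℤ × ℤ)) :
    corner (next F s) = corner s + 2 • turn s := by
  unfold next
  generalize choice F s = j
  fin_cases j <;> ext <;> simp [corner, step, turn, rot] <;> ring

lemma sum_turn_eq_zero_of_iterate_eq {n : ℕ} (hn : (next F)^[n] s = s) :
    ∑ i ∈ range n, turn ((next F)^[i] s) = 0 := by
  have h : 2 • ∑ i ∈ range n, turn ((next F)^[i] s) = 0 := by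
    rw [smul_sum]
    calc ∑ i ∈ range n, 2 • turn ((next F)^[i] s)
        = ∑ i ∈ range n, (corner ((next F)^[i + 1] s) - corner ((next F)^[i] s)) := by
          simp [Function.iterate_succ_apply', corner_next]
      _ = 0 := by
          rw [sum_range_sub (fun i => corner ((next F)^[i] s)), hn, Function.iterate_zero_apply,
            sub_self]
  exact (smul_eq_zero.mp h).resolve_left two_ne_zero

lemma turn_fst_sub_snd (hw : s.2 - s.1 ∈ dirs) :
    (turn s).1 - (turn s).2 = if s.2 - s.1 ∈ ups then 1 else -1 := by
  unfold turn
  generalize s.2 - s.1 = w at hw ⊢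
  revert w
  decide

lemma two_mul_card_up_eq {n : ℕ} (hs : IsBoundaryEdge F s) (hn : (next F)^[n] s = s) :
    2 * #{i ∈ range n | ((next F)^[i] s).2 - ((next F)^[i] s).1 ∈ ups} = n := by
  have hsum := congrArg (fun v : ℤ × ℤ => v.1 - v.2) (sum_turn_eq_zero_of_iterate_eq hn)
  simp only [Prod.fst_sum, Prod.snd_sum, Prod.fst_zero, Prod.snd_zero, sub_zero,
    ← sum_sub_distrib] at hsum
  rw [sum_congr rfl fun i _ => turn_fst_sub_snd (isBoundaryEdge_iterate hs i).1, sum_ite,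
    sum_const, sum_const] at hsum
  have := card_filter_add_card_filter_not (s := range n)
    (fun i => ((next F)^[i] s).2 - ((next F)^[i] s).1 ∈ ups)
  rw [card_range] at this
  simp only [nsmul_eq_mul, mul_one, mul_neg] at hsum
  omega

lemma turn_next_ne_neg (hw : s.2 - s.1 ∈ dirs) : turn (next F s) ≠ -turn s := by
  have key : ∀ w ∈ dirs, -w ≠ -rot w ∧ rot w ≠ -rot w ∧ w ≠ -rot w := by decide
  obtain ⟨h0, h1, h2⟩ := key _ hw
  obtain ⟨ht0, ht1, ht2⟩ := turn_step s
  rcases next_cases F s with ⟨-, he⟩ | ⟨-, -, he⟩ | ⟨-, -, he⟩ <;> rw [he]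
  · rwa [ht0, ← neg_sub]
  · rw [ht1]; exact h1
  · rw [ht2]; exact h2

lemma four_le_minimalPeriod_next (hF : F.Finite) (hs : IsBoundaryEdge F s) :
    4 ≤ Function.minimalPeriod (next F) s := by
  have hret := Function.iterate_minimalPeriod (f := next F) (x := s)
  have hpos := Function.minimalPeriod_pos_of_mem_periodicPts (mem_periodicPts_next hF hs)
  have heven := two_mul_card_up_eq hs hret
  have hne : Function.minimalPeriod (next F) s ≠ 2 := fun h => turn_next_ne_neg (F := F) hs.1 <| by
    simpa [h, sum_range_succ, add_eq_zero_iff_eq_neg'] using sum_turn_eq_zero_of_iterate_eq hret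
  omega

lemma card_le_two_mul_card_image_snd (A : Finset ((ℤ × ℤ) × (ℤ × ℤ)))
    (hA : ∀ s ∈ A, s.2 - s.1 ∈ ups) : #A ≤ 2 * #(A.image Prod.snd) := by
  refine card_le_mul_card_image A 2 fun c _ => ?_
  calc #{s ∈ A | s.2 = c} ≤ #({(c - (1, 0), c), (c - (0, 1), c)} : Finset _) :=
        card_le_card fun s hs => ?_
    _ ≤ 2 := card_le_two
  obtain ⟨hsA, rfl⟩ := mem_filter.mp hs
  have hs1 : s = (s.2 - (s.2 - s.1), s.2) := by simp
  simp only [ups, mem_insert, mem_singleton] at hA ⊢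
  rcases hA s hsA with h | h <;> rw [h] at hs1 <;> simp [← hs1]

def drivenWalk (s₀ : (ℤ × ℤ) × (ℤ × ℤ)) {m : ℕ} (δ : Fin m → Fin 3) : ℕ → (ℤ × ℤ) × (ℤ × ℤ)
  | 0 => s₀
  | i + 1 => step (drivenWalk s₀ δ i) (if h : i < m then δ ⟨i, h⟩ else 0)

def upCells (s₀ : (ℤ × ℤ) × (ℤ × ℤ)) {m : ℕ} (δ : Fin m → Fin 3) : Finset (ℤ × ℤ) :=
  {s ∈ (range (m + 1)).image (drivenWalk s₀ δ) | s.2 - s.1 ∈ ups}.image Prod.snd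

noncomputable def choiceSeq (F : Set (ℤ × ℤ)) (s₀ : (ℤ × ℤ) × (ℤ × ℤ)) (m : ℕ) : Fin m → Fin 3 :=
  fun j => choice F ((next F)^[j] s₀)

lemma drivenWalk_choiceSeq (F : Set (ℤ × ℤ)) (s₀ : (ℤ × ℤ) × (ℤ × ℤ)) (m : ℕ) :
    ∀ i ≤ m, drivenWalk s₀ (choiceSeq F s₀ m) i = (next F)^[i] s₀
  | 0, _ => rfl
  | i + 1, hi => by
    rw [drivenWalk, dif_pos (by omega), drivenWalk_choiceSeq F s₀ m i (by omega),
      Function.iterate_succ_apply']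
    rfl

lemma upCells_choiceSeq (F : Set (ℤ × ℤ)) (s₀ : (ℤ × ℤ) × (ℤ × ℤ)) (m : ℕ) :
    upCells s₀ (choiceSeq F s₀ m) =
      {s ∈ (range (m + 1)).image ((next F)^[·] s₀) | s.2 - s.1 ∈ ups}.image Prod.snd := by
  rw [upCells, image_congr fun i hi =>
    drivenWalk_choiceSeq F s₀ m i (Nat.lt_succ_iff.mp (mem_range.mp hi))]

lemma mem_upCells_choiceSeq (hs₀ : IsBoundaryEdge F s₀) {m : ℕ} {c : ℤ × ℤ}
    (hc : c ∈ upCells s₀ (choiceSeq F s₀ m)) : c ∉ F ∧ ∃ w ∈ ups, c - w ∈ F := by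
  rw [upCells_choiceSeq] at hc
  obtain ⟨_, hs, rfl⟩ := mem_image.mp hc
  obtain ⟨hs, hup⟩ := mem_filter.mp hs
  obtain ⟨i, -, rfl⟩ := mem_image.mp hs
  obtain ⟨-, ha, hb⟩ := isBoundaryEdge_iterate hs₀ i
  exact ⟨hb, _, hup, by simpa using ha⟩

lemma minimalPeriod_le_four_mul_card_upCells (hs₀ : IsBoundaryEdge F s₀)
    {m : ℕ} (hm : m + 1 = Function.minimalPeriod (next F) s₀) :
    m + 1 ≤ 4 * #(upCells s₀ (choiceSeq F s₀ m)) := by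
  have hinj : Set.InjOn ((next F)^[·] s₀) (range (m + 1)) := by
    simpa only [coe_range, hm] using Function.iterate_injOn_Iio_minimalPeriod
  have hup := two_mul_card_up_eq hs₀ (hm ▸ Function.iterate_minimalPeriod)
  have hcount : #{s ∈ (range (m + 1)).image ((next F)^[·] s₀) | s.2 - s.1 ∈ ups} =
      #{i ∈ range (m + 1) | ((next F)^[i] s₀).2 - ((next F)^[i] s₀).1 ∈ ups} := by
    rw [filter_image, card_image_of_injOn (hinj.mono (filter_subset _ _))]
  have hcard := card_le_two_mul_card_image_snd
    {s ∈ (range (m + 1)).image ((next F)^[·] s₀) | s.2 - s.1 ∈ ups}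
    fun s hs => (mem_filter.mp hs).2
  rw [upCells_choiceSeq]
  omega

theorem exists_closed_walk (hF : F.Finite) (hs₀ : IsBoundaryEdge F s₀) :
    ∃ (k : ℕ) (δ : Fin (k + 3) → Fin 3),
      (∀ c ∈ upCells s₀ δ, c ∉ F ∧ ∃ w ∈ ups, c - w ∈ F) ∧ k + 4 ≤ 4 * #(upCells s₀ δ) := by
  obtain ⟨k, hk⟩ : ∃ k, k + 3 + 1 = Function.minimalPeriod (next F) s₀ :=
    ⟨_, Nat.sub_add_cancel (four_le_minimalPeriod_next hF hs₀)⟩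
  exact ⟨k, choiceSeq F s₀ (k + 3), fun c hc => mem_upCells_choiceSeq hs₀ hc,
    minimalPeriod_le_four_mul_card_upCells hs₀ hk⟩

end BoundaryWalk

section Separation

open Finset

def SitesFar (N : ℕ) (p q : ℤ × ℕ) : Prop :=
  (2 * N : ℤ) < max |p.1 - q.1| |(p.2 : ℤ) - (q.2 : ℤ)|

instance (N : ℕ) : DecidableRel (SitesFar N) := fun _ _ => inferInstanceAs (Decidable (_ < _))

lemma card_filter_not_sitesFar_le (N : ℕ) (S : Finset (ℤ × ℕ)) (p : ℤ × ℕ) :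
    #{q ∈ S | ¬ SitesFar N p q} ≤ (4 * N + 1) ^ 2 := by
  calc #{q ∈ S | ¬ SitesFar N p q}
      ≤ #(Icc (p.1 - 2 * N) (p.1 + 2 * N) ×ˢ Icc (p.2 - 2 * N) (p.2 + 2 * N)) :=
        card_le_card fun q hq => ?_
    _ ≤ (4 * N + 1) ^ 2 := by
        rw [card_product, Int.card_Icc, Nat.card_Icc, sq]
        exact Nat.mul_le_mul (by omega) (by omega)
  obtain ⟨-, hq⟩ := mem_filter.mp hq
  simp only [SitesFar, not_lt, max_le_iff, abs_le] at hq
  simp only [mem_product, mem_Icc]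
  omega

lemma exists_separatedSites (N : ℕ) (S : Finset (ℤ × ℕ)) :
    ∃ T ⊆ S, (T : Set (ℤ × ℕ)).Pairwise (SitesFar N) ∧ #S ≤ (4 * N + 1) ^ 2 * #T :=
  Finset.exists_subset_pairwise_card_le_mul
    (fun _ _ h => by simpa [SitesFar, abs_sub_comm] using h) (fun _ => by simp [SitesFar]) S
    fun p _ => card_filter_not_sitesFar_le N S p

noncomputable def separatedSites (N : ℕ) (S : Finset (ℤ × ℕ)) : Finset (ℤ × ℕ) :=
  (exists_separatedSites N S).choose

lemma separatedSites_spec (N : ℕ) (S : Finset (ℤ × ℕ)) :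
    separatedSites N S ⊆ S ∧ (separatedSites N S : Set (ℤ × ℕ)).Pairwise (SitesFar N) ∧
      #S ≤ (4 * N + 1) ^ 2 * #(separatedSites N S) :=
  (exists_separatedSites N S).choose_spec

end Separation

section Cluster

variable {Ω : Type*} {op : ℤ → ℕ → Set Ω} {ω : Ω}

lemma Reaches.extend {x y y' : ℤ} {m n : ℕ} (h : Reaches op ω x m y n) (hmn : m ≤ n)
    (hy : y' - y = 1 ∨ y' - y = -1) (hop : ω ∈ op y' (n + 1)) : Reaches op ω x m y' (n + 1) := by
  obtain ⟨f, hfm, hfn, hstep, hopen⟩ := h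
  refine ⟨fun k => if k ≤ n then f k else y', by simp [hmn, hfm], by simp,
    fun k hk hkn => ?_, fun k hk hkn => ?_⟩
  · rcases (by omega : k ≤ n ∨ k = n + 1) with hk' | rfl
    · simpa [hk', (by omega : k - 1 ≤ n)] using hstep k hk hk'
    · simpa [hfn] using hy
  · rcases (by omega : k ≤ n ∨ k = n + 1) with hk' | rfl
    · simpa [hk'] using hopen k hk hk'
    · simpa using hop

def toSite (c : ℤ × ℤ) : ℤ × ℕ := (c.1 - c.2, (c.1 + c.2).toNat)

variable (op ω) in
def clusterCells : Set (ℤ × ℤ) :=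
  {c | 0 ≤ c.1 + c.2 ∧ Reaches op ω 0 0 (toSite c).1 (toSite c).2}

lemma toSite_injOn : Set.InjOn toSite {c : ℤ × ℤ | 0 ≤ c.1 + c.2} := by
  intro c (hc : 0 ≤ c.1 + c.2) d (hd : 0 ≤ d.1 + d.2) h
  simp only [toSite, Prod.mk.injEq] at h
  ext <;> omega

lemma finite_clusterCells
    (h : {q : ℤ × ℕ | Even (q.1 + (q.2 : ℤ)) ∧ Reaches op ω 0 0 q.1 q.2}.Finite) :
    (clusterCells op ω).Finite := by
  refine Set.Finite.of_finite_image (h.subset ?_) (toSite_injOn.mono fun _ hc => hc.1)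
  rintro _ ⟨c, ⟨hc, hr⟩, rfl⟩
  exact ⟨⟨c.1, by simp only [toSite]; omega⟩, hr⟩

lemma origin_mem_clusterCells (hop : ω ∈ op 0 0) : ((0, 0) : ℤ × ℤ) ∈ clusterCells op ω :=
  ⟨le_rfl, show Reaches op ω 0 0 0 0 from ⟨fun _ => 0, rfl, rfl, fun _ _ _ => by omega,
    fun k _ hk => by simpa [(by omega : k = 0)] using hop⟩⟩

lemma fst_add_snd_eq_of_mem_ups {c w : ℤ × ℤ} (hw : w ∈ ups) :
    c.1 + c.2 = (c - w).1 + (c - w).2 + 1 := by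
  simp only [ups, Finset.mem_insert, Finset.mem_singleton] at hw
  rcases hw with rfl | rfl <;> simp <;> ring

lemma notMem_op_toSite {c w : ℤ × ℤ} (hw : w ∈ ups) (hcw : c - w ∈ clusterCells op ω)
    (hc : c ∉ clusterCells op ω) : ω ∉ op (toSite c).1 (toSite c).2 := by
  intro hop
  obtain ⟨hpos, hr⟩ := hcw
  have hsum := fst_add_snd_eq_of_mem_ups (c := c) hw
  have hdiff : (toSite c).1 - (toSite (c - w)).1 = 1 ∨
      (toSite c).1 - (toSite (c - w)).1 = -1 := by
    simp only [ups, Finset.mem_insert, Finset.mem_singleton] at hw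
    rcases hw with rfl | rfl <;> simp [toSite]
  have hn : (toSite c).2 = (toSite (c - w)).2 + 1 := by simp only [toSite]; omega
  refine hc ⟨by omega, ?_⟩
  rw [hn] at hop ⊢
  exact Reaches.extend hr (Nat.zero_le _) hdiff hop

end Cluster

section Events

open Finset

variable {Ω : Type*} {m0 : MeasurableSpace Ω} {P : Measure Ω} {N : ℕ} {op : ℤ → ℕ → Set Ω}

noncomputable def contourSites (N : ℕ) (d : Σ k, Fin (k + 3) → Fin 3) : Finset (ℤ × ℕ) :=
  separatedSites N ((upCells ((0, 0), (0, -1)) d.2).image toSite)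

variable (N op) in
def contourEvent (d : Σ k, Fin (k + 3) → Fin 3) : Set Ω :=
  {ω | d.1 + 4 ≤ 4 * (4 * N + 1) ^ 2 * #(contourSites N d) ∧
    (∀ p ∈ contourSites N d, Even (p.1 + (p.2 : ℤ))) ∧ ∀ p ∈ contourSites N d, ω ∉ op p.1 p.2}

variable (N op) in
theorem setOf_finite_cluster_subset :
    {ω | {q : ℤ × ℕ | Even (q.1 + (q.2 : ℤ)) ∧ Reaches op ω 0 0 q.1 q.2}.Finite} ⊆
      (op 0 0)ᶜ ∪ ⋃ d, contourEvent N op d := by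
  intro ω hfin
  by_cases hop : ω ∉ op 0 0
  · exact Or.inl hop
  obtain ⟨k, δ, hcells, hlen⟩ := exists_closed_walk (finite_clusterCells hfin)
    (⟨by decide, origin_mem_clusterCells (not_not.mp hop), fun h => by simpa using h.1⟩ :
      IsBoundaryEdge (clusterCells op ω) ((0, 0), (0, -1)))
  have hpos : ∀ c ∈ upCells ((0, 0), (0, -1)) δ, 0 ≤ c.1 + c.2 := fun c hc => by
    obtain ⟨-, w, hw, hcw⟩ := hcells c hc
    linarith [fst_add_snd_eq_of_mem_ups (c := c) hw, hcw.1]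
  obtain ⟨hsub, -, hcount⟩ := separatedSites_spec N ((upCells ((0, 0), (0, -1)) δ).image toSite)
  rw [card_image_of_injOn (toSite_injOn.mono hpos)] at hcount
  refine Or.inr (Set.mem_iUnion.mpr ⟨⟨k, δ⟩, ?_, fun p hp => ?_, fun p hp => ?_⟩)
  · calc k + 4 ≤ 4 * #(upCells ((0, 0), (0, -1)) δ) := hlen
      _ ≤ 4 * ((4 * N + 1) ^ 2 * #(contourSites N ⟨k, δ⟩)) := Nat.mul_le_mul_left 4 hcount
      _ = _ := (mul_assoc _ _ _).symm
  · obtain ⟨c, hc, rfl⟩ := mem_image.mp (hsub hp)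
    exact ⟨c.1, by have := hpos c hc; simp only [toSite]; omega⟩
  · obtain ⟨c, hc, rfl⟩ := mem_image.mp (hsub hp)
    obtain ⟨hcC, w, hw, hcw⟩ := hcells c hc
    exact notMem_op_toSite hw hcw hcC

lemma measure_contourEvent_le {z : ℝ} (hz0 : 0 ≤ z) (hz1 : z ≤ 1)
    (hdep : TwoNDependentDensity P N (z ^ (4 * (4 * N + 1) ^ 2)) op)
    (d : Σ k, Fin (k + 3) → Fin 3) :
    P (contourEvent N op d) ≤ ENNReal.ofReal (z ^ (d.1 + 4)) := by
  by_cases hgood : d.1 + 4 ≤ 4 * (4 * N + 1) ^ 2 * #(contourSites N d) ∧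
    ∀ p ∈ contourSites N d, Even (p.1 + (p.2 : ℤ))
  · calc P (contourEvent N op d) ≤ P (⋂ p ∈ contourSites N d, (op p.1 p.2)ᶜ) :=
          measure_mono fun ω hω => Set.mem_iInter₂.mpr hω.2.2
      _ ≤ ENNReal.ofReal ((z ^ (4 * (4 * N + 1) ^ 2)) ^ #(contourSites N d)) :=
          hdep _ hgood.2 fun p hp q hq hpq => (separatedSites_spec N _).2.1 hp hq hpq
      _ ≤ ENNReal.ofReal (z ^ (d.1 + 4)) := by
          rw [← pow_mul]
          exact ENNReal.ofReal_le_ofReal (pow_le_pow_of_le_one hz0 hz1 hgood.1)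
  · have : contourEvent N op d = ∅ :=
      Set.eq_empty_of_forall_notMem fun ω hω => hgood ⟨hω.1, hω.2.1⟩
    simp [this]

lemma tsum_ofReal_three_pow_mul_pow_le {z : ℝ} (hz0 : 0 ≤ z) (hz : z ≤ 1 / 6) :
    ∑' k : ℕ, ENNReal.ofReal (3 ^ (k + 3) * z ^ (k + 4)) ≤ ENNReal.ofReal (54 * z ^ 4) := by
  have hgeom : HasSum (fun k : ℕ => 27 * z ^ 4 * (3 * z) ^ k) (27 * z ^ 4 * (1 - 3 * z)⁻¹) :=
    (hasSum_geometric_of_lt_one (by positivity) (by linarith)).mul_left _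
  have hterm (k : ℕ) : (3 : ℝ) ^ (k + 3) * z ^ (k + 4) = 27 * z ^ 4 * (3 * z) ^ k := by ring
  simp_rw [hterm]
  rw [← ENNReal.ofReal_tsum_of_nonneg (fun k => by positivity) hgeom.summable, hgeom.tsum_eq]
  refine ENNReal.ofReal_le_ofReal ?_
  have : (1 - 3 * z)⁻¹ ≤ 2 := by
    rw [inv_le_comm₀ (by linarith) two_pos]
    linarith
  nlinarith [pow_nonneg hz0 4]

lemma tsum_measure_contourEvent_le {z : ℝ} (hz0 : 0 ≤ z) (hz : z ≤ 1 / 6)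
    (hdep : TwoNDependentDensity P N (z ^ (4 * (4 * N + 1) ^ 2)) op) :
    ∑' d, P (contourEvent N op d) ≤ ENNReal.ofReal (54 * z ^ 4) :=
  calc ∑' d, P (contourEvent N op d)
      ≤ ∑' d : Σ k, Fin (k + 3) → Fin 3, ENNReal.ofReal (z ^ (d.1 + 4)) :=
        ENNReal.tsum_le_tsum (measure_contourEvent_le hz0 (by linarith) hdep)
    _ = ∑' k : ℕ, ENNReal.ofReal (3 ^ (k + 3) * z ^ (k + 4)) := by
        rw [ENNReal.tsum_sigma']
        refine tsum_congr fun k => ?_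
        dsimp only
        rw [tsum_fintype, sum_const, card_univ, Fintype.card_fun, Fintype.card_fin,
          Fintype.card_fin, nsmul_eq_mul, ENNReal.ofReal_mul (by positivity)]
        norm_cast
    _ ≤ ENNReal.ofReal (54 * z ^ 4) := tsum_ofReal_three_pow_mul_pow_le hz0 hz

theorem measure_finite_cluster_le {z : ℝ} (hz0 : 0 ≤ z) (hz : z ≤ 1 / 6)
    (hdep : TwoNDependentDensity P N (z ^ (4 * (4 * N + 1) ^ 2)) op) :
    P {ω | {q : ℤ × ℕ | Even (q.1 + (q.2 : ℤ)) ∧ Reaches op ω 0 0 q.1 q.2}.Finite} ≤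
      ENNReal.ofReal (z ^ (4 * (4 * N + 1) ^ 2) + 54 * z ^ 4) :=
  calc _ ≤ P ((op 0 0)ᶜ ∪ ⋃ d, contourEvent N op d) :=
        measure_mono (setOf_finite_cluster_subset N op)
    _ ≤ P (op 0 0)ᶜ + ∑' d, P (contourEvent N op d) :=
        (measure_union_le _ _).trans (add_le_add le_rfl (measure_iUnion_le _))
    _ ≤ ENNReal.ofReal (z ^ (4 * (4 * N + 1) ^ 2)) + ENNReal.ofReal (54 * z ^ 4) :=
        add_le_add (by simpa using hdep {(0, 0)} (by simp) (by simp))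
          (tsum_measure_contourEvent_le hz0 hz hdep)
    _ = _ := (ENNReal.ofReal_add (by positivity) (by positivity)).symm

end Events

lemma rpow_inv_natCast_le_one_div_six {θ : ℝ} {n : ℕ} (hθ : 0 ≤ θ) (hn : n ≠ 0)
    (h : θ ≤ 6 ^ (-(n : ℝ))) : θ ^ (n⁻¹ : ℝ) ≤ 1 / 6 :=
  calc θ ^ (n⁻¹ : ℝ) ≤ ((6 : ℝ) ^ (-(n : ℝ))) ^ (n⁻¹ : ℝ) :=
        Real.rpow_le_rpow hθ h (by positivity)
    _ = 1 / 6 := by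
        rw [← Real.rpow_mul (by norm_num), neg_mul, mul_inv_cancel₀ (by exact_mod_cast hn),
          Real.rpow_neg_one, one_div]

end OrientedPercolation

theorem durrett_bound_2N_dependent_percolation_general
    {Ω : Type*} {m0 : MeasurableSpace Ω} (P : Measure Ω)
    (N : ℕ) (θ : ℝ) (hθ : θ ∈ Set.Ioo (0 : ℝ) 1)
    (op : ℤ → ℕ → Set Ω)
    (hdep : TwoNDependentDensity P N θ op)
    (hsmall : θ ≤ (6 : ℝ) ^ (-(4 : ℝ) * (4 * (N : ℝ) + 1) ^ 2)) :
    P {ω | {q : ℤ × ℕ | Even (q.1 + (q.2 : ℤ)) ∧ Reaches op ω 0 0 q.1 q.2}.Finite}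
        ≤ ENNReal.ofReal (55 * θ ^ ((1 : ℝ) / (4 * (N : ℝ) + 1) ^ 2)) ∧
      55 * θ ^ ((1 : ℝ) / (4 * (N : ℝ) + 1) ^ 2) ≤ 1 / 20 := by
  obtain ⟨hθ0, hθ1⟩ := hθ
  set B : ℕ := (4 * N + 1) ^ 2 with hB
  have hB0 : B ≠ 0 := by simp [hB]
  rw [show (4 * (N : ℝ) + 1) ^ 2 = B by simp [hB]] at hsmall ⊢
  set z := θ ^ (((4 * B : ℕ) : ℝ)⁻¹)
  have hθz : z ^ (4 * B) = θ := Real.rpow_inv_natCast_pow hθ0.le (by omega)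
  have hz4 : z ^ 4 = θ ^ ((1 : ℝ) / B) := by
    rw [← Real.rpow_natCast, ← Real.rpow_mul hθ0.le]
    congr 1
    push_cast
    field_simp
  have hz6 : z ≤ 1 / 6 := OrientedPercolation.rpow_inv_natCast_le_one_div_six hθ0.le (by omega)
    (by rwa [Nat.cast_mul, Nat.cast_ofNat, ← neg_mul])
  have hz0 : 0 ≤ z := by positivity
  have hθ4 : θ ≤ z ^ 4 := hθz ▸ pow_le_pow_of_le_one hz0 (by linarith) (by omega)
  rw [← hθz] at hdep
  rw [← hz4]
  exact ⟨(OrientedPercolation.measure_finite_cluster_le hz0 hz6 hdep).trans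
      (ENNReal.ofReal_le_ofReal (by linarith)),
    by nlinarith [pow_le_pow_left₀ hz0 hz6 4]⟩

/-- Durrett's bound for `2N`-dependent oriented percolation (Theorem 3.2):
if `θ ≤ 6^{-4(4N+1)²}` then the open cluster of the origin
`C₀ = {(y, n) ∈ 𝓛 : (0,0) → (y,n)}` is finite with probability at most
`55 θ^{1/(4N+1)²}`, and this quantity is at most `1/20`. -/
theorem durrett_bound_2N_dependent_percolation
    {Ω : Type*} {m0 : MeasurableSpace Ω} (P : Measure Ω) [IsProbabilityMeasure P]
    (N : ℕ) (hN : 0 < N) (θ : ℝ) (hθ : θ ∈ Set.Ioo (0 : ℝ) 1)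
    (op : ℤ → ℕ → Set Ω) (hmeas : ∀ x n, MeasurableSet (op x n))
    (hdep : TwoNDependentDensity P N θ op)
    (hsmall : θ ≤ (6 : ℝ) ^ (-(4 : ℝ) * (4 * (N : ℝ) + 1) ^ 2)) :
    P {ω | {q : ℤ × ℕ | Even (q.1 + (q.2 : ℤ)) ∧ Reaches op ω 0 0 q.1 q.2}.Finite}
        ≤ ENNReal.ofReal (55 * θ ^ ((1 : ℝ) / (4 * (N : ℝ) + 1) ^ 2)) ∧
      55 * θ ^ ((1 : ℝ) / (4 * (N : ℝ) + 1) ^ 2) ≤ 1 / 20 :=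
  durrett_bound_2N_dependent_percolation_general (m0 := m0) P N θ hθ op hdep hsmall
end

section
/- Comparison of a noise-driven spin system with 2N-dependent oriented percolation (Theorem 3.5, classical case): Let d, L, N be positive integers and θ ∈ (0, 1). On a probability space, let (U_i(n))_{i∈ℤ^d, n∈ℤ≥0} be i.i.d. random variables with values in a measurable space E, let (V(x, n))_{(x,n)∈𝓛} be i.i.d. uniform-[0,1] random variables, and let ξ(0) be a {0,1}^{ℤ^d}-valued random variable, these three families being mutually independent. Define recursively ξ(n+1) = F(ξ(n), (U_i(n))_{i∈ℤ^d}) for a fixed measurable map F : {0,1}^{ℤ^d} × E^{ℤ^d} → {0,1}^{ℤ^d}. For m ∈ ℤ write ξ(n) ∈ m·H if ξ_i(n) = 1 for all i ∈ (mL e₁ + [−L/2, L/2]^d) ∩ ℤ^d, where e₁ is the first standard basis vector of ℤ^d. Assume the comparison hypothesis: for each (m, n) ∈ 𝓛 there is a measurable set G_{m,n} ⊆ {0,1}^{ℤ^d} × E^{B_m}, where B_m := (mL e₁ + [−NL, NL]^d) ∩ ℤ^d, such that (i) for every configuration ξ ∈ m·H one has P[(ξ, (U_i(n))_{i∈B_m})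 ∈ G_{m,n}] > 1 − θ, and (ii) whenever ξ ∈ m·H, (ξ, (u_i)_{i∈B_m}) ∈ G_{m,n}, and u ∈ E^{ℤ^d} agrees with (u_i) on B_m, then F(ξ, u) ∈ (m+1)·H ∩ (m−1)·H. Then there exist {0,1}-valued random variables (ω(x, n))_{(x,n)∈𝓛} on this probability space forming a 2N-dependent family with density at least 1 − θ such that, almost surely, W_n ⊆ X_n for all n ≥ 0, where X_n := {m ∈ ℤ : (m, n) ∈ 𝓛 and ξ(n) ∈ m·H}, W₀ := X₀, and W_n := {y : (x, 0) → (y, n) for some x ∈ W₀} is the oriented percolation process defined from ω. -/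
/-!
Declare the site `(x, n)` open when either `ξ(n) ∈ x·H` and the good event `G_{x,n}` occurs, or
`ξ(n) ∉ x·H` and `V(x, n) ≤ 1 - θ`. Along an open path the good events carry `ξ(k) ∈ z·H` to
`ξ(k+1) ∈ (z ± 1)·H`, so `W_n ⊆ X_n` holds pointwise. For the density, peel off a site `p` of
latest time from a `2N`-separated set: the other sites are decided by `ξ₀`, the noise before time
`p.2`, the noise on boxes disjoint from `B_{p.1}` and other `V`'s, which are independent of the
noise on `B_{p.1}` at time `p.2` and of `V(p)`. Freezing `ξ(p.2)`, the site `p` is then closed with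
conditional probability at most `θ`.
-/

open MeasureTheory Filter
open scoped ENNReal

noncomputable section

/-- Lattice sites of `ℤ^d`, equipped with the maximum norm. -/
abbrev Site (d : ℕ) := Fin d → ℤ

/-- The box of radius `r` around the site `m L e₁` of `ℤ^d`
(`e₁` the first standard basis vector). -/
def shiftedBox (d L : ℕ) (r : ℝ) (m : ℤ) : Set (Site d) :=
  {i | ‖i - fun k : Fin d => if (k : ℕ) = 0 then m * (L : ℤ) else 0‖ ≤ r}

/-- `ξ ∈ m·H`: the configuration `ξ` is identically `1` on the box
`(m L e₁ + [-L/2, L/2]^d) ∩ ℤ^d`. -/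
def memH (d L : ℕ) (m : ℤ) (ξ : Site d → Bool) : Prop :=
  ∀ i ∈ shiftedBox d L ((L : ℝ) / 2) m, ξ i = true

/-- Index type for the three sources of randomness: the driving noises `U`, the auxiliary
uniform variables `V`, and the initial configuration `ξ₀`. -/
abbrev RandIdx (d : ℕ) := (Site d × ℕ) ⊕ ((ℤ × ℕ) ⊕ Unit)

/-- Codomains of the three families of random variables. -/
def randβ (d : ℕ) (E : Type) : RandIdx d → Type
  | .inl _ => E
  | .inr (.inl _) => ℝ
  | .inr (.inr _) => Site d → Bool

/-- The measurable-space structures on the codomains. -/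
def randσ (d : ℕ) (E : Type) [mE : MeasurableSpace E] :
    ∀ k : RandIdx d, MeasurableSpace (randβ d E k)
  | .inl _ => mE
  | .inr (.inl _) => (inferInstance : MeasurableSpace ℝ)
  | .inr (.inr _) => (inferInstance : MeasurableSpace (Site d → Bool))

/-- The combined family of random variables. -/
def randf {Ω : Type*} {d : ℕ} {E : Type} (U : Site d → ℕ → Ω → E)
    (V : ℤ → ℕ → Ω → ℝ) (ξ0 : Ω → Site d → Bool) :
    ∀ k : RandIdx d, Ω → randβ d E k
  | .inl p => U p.1 p.2
  | .inr (.inl p) => V p.1 p.2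
  | .inr (.inr _) => ξ0

open ProbabilityTheory Set

theorem measure_inter_preimage_le_of_indep {Ω α γ : Type*} [MeasurableSpace α]
    [MeasurableSpace γ] {𝓕 𝓖 m0 : MeasurableSpace Ω} {P : Measure Ω} [IsProbabilityMeasure P]
    (h𝓕 : 𝓕 ≤ m0) (h𝓖 : 𝓖 ≤ m0) (hind : Indep 𝓕 𝓖 P) {X : Ω → α} {Z : Ω → γ}
    (hX : Measurable[𝓕] X) (hZ : Measurable[𝓖] Z) {D : Set (α × γ)} (hD : MeasurableSet D)
    {t : ℝ≥0∞} (ht : ∀ a, P (Z ⁻¹' {z | (a, z) ∈ D}) ≤ t) {A : Set Ω}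
    (hA : MeasurableSet[𝓕] A) :
    P (A ∩ (fun ω => (X ω, Z ω)) ⁻¹' D) ≤ t * P A := by
  set Y : Ω → α × Bool := fun ω => (X ω, A.boolIndicator ω)
  have hY : Measurable[𝓕] Y :=
    hX.prodMk (measurable_to_bool (by rwa [Set.preimage_boolIndicator_true]))
  have hYZ : IndepFun Y Z P :=
    indep_of_indep_of_le_left (indep_of_indep_of_le_right hind hZ.comap_le) hY.comap_le
  have hY0 : Measurable Y := hY.mono h𝓕 le_rfl
  have hZ0 : Measurable Z := hZ.mono h𝓖 le_rfl
  set C : Set ((α × Bool) × γ) := {q | q.1.2 = true ∧ (q.1.1, q.2) ∈ D}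
  have hC : MeasurableSet C :=
    (measurable_fst.snd (measurableSet_singleton true)).inter
      ((measurable_fst.fst.prodMk measurable_snd) hD)
  have hB : MeasurableSet {a : α × Bool | a.2 = true} :=
    measurable_snd (measurableSet_singleton true)
  have hYB : Y ⁻¹' {a | a.2 = true} = A := by
    ext ω; exact (Set.mem_iff_boolIndicator A ω).symm
  have hYZC : A ∩ (fun ω => (X ω, Z ω)) ⁻¹' D = (fun ω => (Y ω, Z ω)) ⁻¹' C := by
    ext ω; simp [C, Y, ← Set.mem_iff_boolIndicator]
  calc P (A ∩ (fun ω => (X ω, Z ω)) ⁻¹' D)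
      = ((P.map Y).prod (P.map Z)) C := by
        rw [hYZC, ← (indepFun_iff_map_prod_eq_prod_map_map hY0.aemeasurable
          hZ0.aemeasurable).1 hYZ, Measure.map_apply (hY0.prodMk hZ0) hC]
    _ = ∫⁻ a, P.map Z (Prod.mk a ⁻¹' C) ∂(P.map Y) := Measure.prod_apply hC
    _ ≤ ∫⁻ a, {a : α × Bool | a.2 = true}.indicator (fun _ => t) a ∂(P.map Y) := by
        refine lintegral_mono fun a => ?_
        by_cases ha : a.2 = true
        · rw [Set.indicator_of_mem (show a ∈ {a : α × Bool | a.2 = true} from ha),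
            Measure.map_apply hZ0 (measurable_prodMk_left hC)]
          simpa [C, ha] using ht a.1
        · have : Prod.mk a ⁻¹' C = ∅ := by ext z; simp [C, ha]
          simp [this]
    _ = t * P A := by rw [lintegral_indicator_const hB, Measure.map_apply hY0 hB, hYB]

theorem measure_lt_le_of_map_eq_uniform {Ω : Type*} {m0 : MeasurableSpace Ω} {P : Measure Ω}
    {V : Ω → ℝ} (hV : Measurable V) (hunif : P.map V = volume.restrict (Icc (0 : ℝ) 1))
    (a : ℝ) : P {ω | a < V ω} ≤ ENNReal.ofReal (1 - a) :=
  calc P {ω | a < V ω} = volume (Ioi a ∩ Icc 0 1) := by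
        rw [← Measure.restrict_apply measurableSet_Ioi, ← hunif,
          Measure.map_apply hV measurableSet_Ioi]; rfl
    _ ≤ volume (Ioc a 1) := measure_mono fun r hr => ⟨hr.1, hr.2.2⟩
    _ = ENNReal.ofReal (1 - a) := Real.volume_Ioc

/-- Where the comparison hypothesis says nothing (outside `H`), the auxiliary uniform variable
opens the site with probability `1 - θ`. -/
def openRule {α β : Type*} (H : Set α) (G : Set (α × β)) (θ : ℝ) : Set (α × β × ℝ) :=
  {q | (q.1 ∈ H → (q.1, q.2.1) ∈ G) ∧ (q.1 ∉ H → q.2.2 ≤ 1 - θ)}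

theorem measurableSet_openRule {α β : Type*} [MeasurableSpace α] [MeasurableSpace β]
    {H : Set α} {G : Set (α × β)} (hH : MeasurableSet H) (hG : MeasurableSet G) (θ : ℝ) :
    MeasurableSet (openRule H G θ) :=
  ((measurable_fst hH).himp ((measurable_fst.prodMk measurable_snd.fst) hG)).inter
    ((measurable_fst hH).compl.himp (measurable_snd.snd (measurableSet_Iic (a := 1 - θ))))

theorem measure_inter_not_mem_openRule_le {Ω α β : Type*} [MeasurableSpace α]
    [MeasurableSpace β] {𝓕 𝓖 m0 : MeasurableSpace Ω} {P : Measure Ω} [IsProbabilityMeasure P]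
    (h𝓕 : 𝓕 ≤ m0) (h𝓖 : 𝓖 ≤ m0) (hind : Indep 𝓕 𝓖 P) {X : Ω → α} {W : Ω → β} {V : Ω → ℝ}
    (hX : Measurable[𝓕] X) (hW : Measurable[𝓖] W) (hV : Measurable[𝓖] V)
    (hunif : P.map V = volume.restrict (Icc (0 : ℝ) 1)) {H : Set α} (hH : MeasurableSet H)
    {G : Set (α × β)} (hG : MeasurableSet G) {θ : ℝ}
    (hGprob : ∀ a ∈ H, ENNReal.ofReal (1 - θ) < P {ω | (a, W ω) ∈ G}) {A : Set Ω}
    (hA : MeasurableSet[𝓕] A) :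
    P (A ∩ {ω | (X ω, W ω, V ω) ∉ openRule H G θ}) ≤ ENNReal.ofReal θ * P A := by
  refine measure_inter_preimage_le_of_indep h𝓕 h𝓖 hind hX (hW.prodMk hV)
    (measurableSet_openRule hH hG θ).compl (fun a => ?_) hA
  by_cases ha : a ∈ H
  · have hGa : MeasurableSet {ω | (a, W ω) ∈ G} :=
      (measurable_const.prodMk (hW.mono h𝓖 le_rfl)) hG
    calc P {ω | (a, W ω, V ω) ∉ openRule H G θ} = P {ω | (a, W ω) ∈ G}ᶜ := by
          congr 1; ext ω; simp [openRule, ha]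
      _ = 1 - P {ω | (a, W ω) ∈ G} := prob_compl_eq_one_sub hGa
      _ ≤ 1 - ENNReal.ofReal (1 - θ) := tsub_le_tsub_left (hGprob a ha).le 1
      _ ≤ ENNReal.ofReal θ := by
          rw [tsub_le_iff_right, ← ENNReal.ofReal_one]
          simpa using ENNReal.ofReal_add_le (p := θ) (q := 1 - θ)
  · calc P {ω | (a, W ω, V ω) ∉ openRule H G θ} = P {ω | 1 - θ < V ω} := by
          congr 1; ext ω; simp [openRule, ha]
      _ ≤ ENNReal.ofReal θ := by
          simpa using measure_lt_le_of_map_eq_uniform (hV.mono h𝓖 le_rfl) hunif (1 - θ)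

theorem measure_biInter_le_pow_card {Ω ι κ : Type*} [LinearOrder κ] {m0 : MeasurableSpace Ω}
    (P : Measure Ω) [IsProbabilityMeasure P] {D : ι → Set Ω} {𝓖 : ι → MeasurableSpace Ω}
    {t : ℝ≥0∞} (τ : ι → κ) (I : Finset ι)
    (hD : ∀ p ∈ I, ∀ q ∈ I, q ≠ p → τ q ≤ τ p → MeasurableSet[𝓖 p] (D q))
    (ht : ∀ p ∈ I, ∀ A, MeasurableSet[𝓖 p] A → P (A ∩ D p) ≤ t * P A) :
    P (⋂ q ∈ I, D q) ≤ t ^ I.card := by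
  classical
  induction I using Finset.strongInduction with
  | H I ih =>
    rcases I.eq_empty_or_nonempty with rfl | hI
    · simp
    obtain ⟨p, hp, hmax⟩ := I.exists_max_image τ hI
    have hrest : MeasurableSet[𝓖 p] (⋂ q ∈ I.erase p, D q) :=
      .biInter (I.erase p).countable_toSet fun q hq =>
        hD p hp q (Finset.mem_of_mem_erase hq) (Finset.ne_of_mem_erase hq)
          (hmax q (Finset.mem_of_mem_erase hq))
    calc P (⋂ q ∈ I, D q) = P ((⋂ q ∈ I.erase p, D q) ∩ D p) := by
          rw [← Finset.insert_erase hp, Finset.set_biInter_insert, Finset.erase_insert_eq_erase,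
            Finset.erase_idem, inter_comm]
      _ ≤ t * P (⋂ q ∈ I.erase p, D q) := ht p hp _ hrest
      _ ≤ t * t ^ (I.erase p).card := by
          gcongr
          exact ih _ (I.erase_ssubset hp)
            (fun p' hp' q hq => hD p' (Finset.mem_of_mem_erase hp') q (Finset.mem_of_mem_erase hq))
            (fun p' hp' => ht p' (Finset.mem_of_mem_erase hp'))
      _ = t ^ I.card := by rw [← pow_succ', Finset.card_erase_add_one hp]

theorem Reaches.propagate {Ω : Type*} {op : ℤ → ℕ → Set Ω} {ω : Ω} {x y : ℤ} {m n : ℕ}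
    (h : Reaches op ω x m y n) (hmn : m ≤ n) {Q : ℤ → ℕ → Prop} (hx : Q x m)
    (hstep : ∀ z k, m ≤ k → k < n → ω ∈ op z k → Q z k → Q (z + 1) (k + 1) ∧ Q (z - 1) (k + 1)) :
    Q y n := by
  obtain ⟨f, rfl, rfl, hf, hopen⟩ := h
  suffices ∀ k, m ≤ k → k ≤ n → Q (f k) k from this n hmn le_rfl
  intro k hmk
  induction k, hmk using Nat.le_induction with
  | base => exact fun _ => hx
  | succ k hmk ih =>
    intro hkn
    have hQ := hstep (f k) k hmk hkn (hopen k hmk (by omega)) (ih (by omega))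
    rcases hf (k + 1) (by omega) hkn with h | h <;> simp only [Nat.add_sub_cancel] at h
    · rw [show f (k + 1) = f k + 1 by omega]; exact hQ.1
    · rw [show f (k + 1) = f k - 1 by omega]; exact hQ.2

theorem measurableSet_memH (d L : ℕ) (x : ℤ) :
    MeasurableSet {ξc : Site d → Bool | memH d L x ξc} := by
  simp only [memH, Set.ofPred_forall]
  exact .biInter (Set.to_countable _) fun i _ =>
    measurableSet_eq_fun (measurable_pi_apply i) measurable_const

theorem disjoint_shiftedBox {d : ℕ} (hd : 0 < d) {L : ℕ} (hL : 0 < L) {N : ℕ} {x y : ℤ}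
    (hxy : 2 * N < |x - y|) :
    Disjoint (shiftedBox d L (N * L) x) (shiftedBox d L (N * L) y) := by
  refine Set.disjoint_left.2 fun i hx hy => ?_
  have hcoord : ∀ z : ℤ, i ∈ shiftedBox d L (N * L) z → |i ⟨0, hd⟩ - z * L| ≤ N * L := by
    intro z hz
    have := (norm_le_pi_norm _ ⟨0, hd⟩).trans hz
    simp only [Pi.sub_apply, Int.norm_eq_abs] at this
    exact_mod_cast this
  have h2 : |x - y| * L ≤ 2 * N * L := by
    have := abs_sub_le (x * L) (i ⟨0, hd⟩) (y * L)
    rw [← sub_mul, abs_mul, Nat.abs_cast, abs_sub_comm (x * L)] at this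
    linarith [hcoord x hx, hcoord y hy]
  nlinarith

section Construction

variable {Ω : Type*} {m0 : MeasurableSpace Ω} {E : Type} {d L N : ℕ}
  {U : Site d → ℕ → Ω → E} {V : ℤ → ℕ → Ω → ℝ} {ξ0 : Ω → Site d → Bool}
  {ξ : ℕ → Ω → Site d → Bool}

variable (d) in
/-- The sources on which `ξ n` depends. -/
def pastIdx (n : ℕ) : Set (RandIdx d)
  | .inl (_, k) => k < n
  | .inr (.inl _) => False
  | .inr (.inr _) => True

variable (d L N) in
/-- The sources read at the site `(x, n)` besides the past: the noise on `B_x` and `V(x, n)`. -/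
def siteIdx (x : ℤ) (n : ℕ) : Set (RandIdx d)
  | .inl (i, k) => k = n ∧ i ∈ shiftedBox d L (N * L) x
  | .inr (.inl p) => p = (x, n)
  | .inr (.inr _) => False

def openSite (θ : ℝ) (U : Site d → ℕ → Ω → E) (V : ℤ → ℕ → Ω → ℝ) (ξ : ℕ → Ω → Site d → Bool)
    (G : (m : ℤ) → ℕ → Set ((Site d → Bool) × (shiftedBox d L (N * L) m → E)))
    (x : ℤ) (n : ℕ) : Set Ω :=
  {ω | Even (x + n) ∧ (ξ n ω, (fun i : shiftedBox d L (N * L) x => U i n ω), V x n ω) ∈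
    openRule {ξc | memH d L x ξc} (G x n) θ}

theorem even_and_memH_of_reaches_openSite {F : (Site d → Bool) → (Site d → E) → Site d → Bool}
    (hξrec : ∀ n ω, ξ (n + 1) ω = F (ξ n ω) fun i => U i n ω) {θ : ℝ}
    {G : (m : ℤ) → ℕ → Set ((Site d → Bool) × (shiftedBox d L (N * L) m → E))}
    (hGgood : ∀ (m : ℤ) (n : ℕ), Even (m + (n : ℤ)) →
      ∀ (ξc : Site d → Bool) (u : Site d → E), memH d L m ξc →
        (ξc, fun i : shiftedBox d L (N * L) m => u i) ∈ G m n →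
        memH d L (m + 1) (F ξc u) ∧ memH d L (m - 1) (F ξc u))
    {ω : Ω} {x y : ℤ} {n : ℕ} (hx : Even x ∧ memH d L x (ξ 0 ω))
    (h : Reaches (openSite θ U V ξ G) ω x 0 y n) :
    Even (y + n) ∧ memH d L y (ξ n ω) := by
  refine h.propagate (Q := fun z k => Even (z + k) ∧ memH d L z (ξ k ω)) n.zero_le
    (by simpa using hx) ?_
  rintro z k - - ⟨hzk, hrule⟩ ⟨-, hz⟩
  have hgood := hGgood z k hzk (ξ k ω) (fun i => U i k ω) hz (hrule.1 hz)
  rw [hξrec]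
  rw [Int.even_iff] at hzk
  exact ⟨⟨Int.even_iff.2 (by omega), hgood.1⟩, ⟨Int.even_iff.2 (by omega), hgood.2⟩⟩

variable [MeasurableSpace E]

variable (U V ξ0) in
abbrev randSigma (S : Set (RandIdx d)) : MeasurableSpace Ω :=
  ⨆ j ∈ S, (randσ d E j).comap (randf U V ξ0 j)

theorem pastIdx_mono : Monotone (pastIdx d) := by
  rintro m n hmn (⟨i, k⟩ | _ | _) hj
  exacts [hj.trans_le hmn, hj, hj]

theorem measurable_randf_of_mem {S : Set (RandIdx d)} {j : RandIdx d} (hj : j ∈ S) :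
    @Measurable Ω (randβ d E j) (randSigma U V ξ0 S) (randσ d E j) (randf U V ξ0 j) :=
  .of_comap_le (le_iSup₂ (f := fun k (_ : k ∈ S) => (randσ d E k).comap (randf U V ξ0 k)) j hj)

theorem randSigma_le (hmeas : ∀ j, @Measurable Ω (randβ d E j) m0 (randσ d E j) (randf U V ξ0 j))
    (S : Set (RandIdx d)) : randSigma U V ξ0 S ≤ m0 :=
  iSup₂_le fun j _ => (hmeas j).comap_le

theorem measurable_of_pastIdx_subset {F : (Site d → Bool) → (Site d → E) → Site d → Bool}
    (hF : Measurable fun q : (Site d → Bool) × (Site d → E) => F q.1 q.2) (hξ0 : ξ 0 = ξ0)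
    (hξrec : ∀ n ω, ξ (n + 1) ω = F (ξ n ω) fun i => U i n ω) {S : Set (RandIdx d)} {n : ℕ}
    (hS : pastIdx d n ⊆ S) : Measurable[randSigma U V ξ0 S] (ξ n) := by
  induction n with
  | zero => rw [hξ0]; exact measurable_randf_of_mem (j := .inr (.inr ())) (hS trivial)
  | succ n ih =>
    have hU : Measurable[randSigma U V ξ0 S] fun ω i => U i n ω := by
      let := randSigma U V ξ0 S
      exact measurable_pi_lambda _ fun i =>
        measurable_randf_of_mem (j := .inl (i, n)) (hS (Nat.lt_succ_self n))
    simp_rw [funext (hξrec n)]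
    exact hF.comp ((ih ((pastIdx_mono n.le_succ).trans hS)).prodMk hU)

theorem measurable_noise_of_siteIdx_subset {S : Set (RandIdx d)} {x : ℤ} {n : ℕ}
    (hS : siteIdx d L N x n ⊆ S) :
    Measurable[randSigma U V ξ0 S] fun ω (i : shiftedBox d L (N * L) x) => U i n ω := by
  let := randSigma U V ξ0 S
  refine measurable_pi_lambda _ fun i => ?_
  have hi : (.inl (i.1, n) : RandIdx d) ∈ S := hS ⟨rfl, i.2⟩
  exact measurable_randf_of_mem hi

theorem measurable_V_of_siteIdx_subset {S : Set (RandIdx d)} {x : ℤ} {n : ℕ}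
    (hS : siteIdx d L N x n ⊆ S) : Measurable[randSigma U V ξ0 S] (V x n) :=
  measurable_randf_of_mem (j := .inr (.inl (x, n))) (hS rfl)

theorem measurableSet_openSite {F : (Site d → Bool) → (Site d → E) → Site d → Bool}
    (hF : Measurable fun q : (Site d → Bool) × (Site d → E) => F q.1 q.2) (hξ0 : ξ 0 = ξ0)
    (hξrec : ∀ n ω, ξ (n + 1) ω = F (ξ n ω) fun i => U i n ω) (θ : ℝ)
    {G : (m : ℤ) → ℕ → Set ((Site d → Bool) × (shiftedBox d L (N * L) m → E))} {x : ℤ} {n : ℕ}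
    (hG : MeasurableSet (G x n)) {S : Set (RandIdx d)}
    (hS : pastIdx d n ∪ siteIdx d L N x n ⊆ S) :
    MeasurableSet[randSigma U V ξ0 S] (openSite θ U V ξ G x n) :=
  (MeasurableSet.const _).inter
    (((measurable_of_pastIdx_subset hF hξ0 hξrec (subset_union_left.trans hS)).prodMk
      ((measurable_noise_of_siteIdx_subset (subset_union_right.trans hS)).prodMk
        (measurable_V_of_siteIdx_subset (subset_union_right.trans hS))))
      (measurableSet_openRule (measurableSet_memH d L x) hG θ))

theorem pastIdx_subset_compl_siteIdx (x : ℤ) (n : ℕ) :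
    pastIdx d n ⊆ (siteIdx d L N x n)ᶜ := by
  rintro (⟨i, k⟩ | _ | _) hj hj'
  exacts [hj.ne hj'.1, hj, hj']

theorem pastIdx_union_siteIdx_subset_compl (hd : 0 < d) (hL : 0 < L) {x y : ℤ} {m n : ℕ}
    (hne : (y, m) ≠ (x, n)) (hmn : m ≤ n)
    (hsep : 2 * (N : ℤ) < max |y - x| |(m : ℤ) - n|) :
    pastIdx d m ∪ siteIdx d L N y m ⊆ (siteIdx d L N x n)ᶜ := by
  rintro (⟨i, k⟩ | ⟨z, k⟩ | _) hj hj'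
  · obtain ⟨rfl, hix⟩ := hj'
    rcases hj with hk | ⟨rfl, hiy⟩
    · exact absurd hmn (not_le.2 hk)
    · have hyx : 2 * (N : ℤ) < |y - x| := by simpa [sub_self] using hsep
      exact Set.disjoint_left.1 (disjoint_shiftedBox hd hL hyx) hiy hix
  · rcases hj with hj | hj
    exacts [hj.elim, hne (hj.symm.trans hj')]
  · rcases hj with hj | hj
    exacts [hj', hj]

theorem measure_inter_compl_openSite_le {P : Measure Ω} [IsProbabilityMeasure P]
    (hmeas : ∀ j, @Measurable Ω (randβ d E j) m0 (randσ d E j) (randf U V ξ0 j))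
    (hindep : iIndepFun (m := randσ d E) (randf U V ξ0) P)
    {F : (Site d → Bool) → (Site d → E) → Site d → Bool}
    (hF : Measurable fun q : (Site d → Bool) × (Site d → E) => F q.1 q.2) (hξ0 : ξ 0 = ξ0)
    (hξrec : ∀ n ω, ξ (n + 1) ω = F (ξ n ω) fun i => U i n ω) {θ : ℝ}
    {G : (m : ℤ) → ℕ → Set ((Site d → Bool) × (shiftedBox d L (N * L) m → E))} {x : ℤ} {n : ℕ}
    (heven : Even (x + n)) (hunif : P.map (V x n) = volume.restrict (Icc (0 : ℝ) 1))
    (hG : MeasurableSet (G x n))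
    (hGprob : ∀ ξc : Site d → Bool, memH d L x ξc →
      ENNReal.ofReal (1 - θ) < P {ω | (ξc, fun i : shiftedBox d L (N * L) x => U i n ω) ∈ G x n})
    {A : Set Ω} (hA : MeasurableSet[randSigma U V ξ0 (siteIdx d L N x n)ᶜ] A) :
    P (A ∩ (openSite θ U V ξ G x n)ᶜ) ≤ ENNReal.ofReal θ * P A := by
  have hind : Indep (randSigma U V ξ0 (siteIdx d L N x n)ᶜ)
      (randSigma U V ξ0 (siteIdx d L N x n)) P :=
    (indep_biSup_compl (fun j => (hmeas j).comap_le) hindep.iIndep _).symm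
  have hA' : A ∩ (openSite θ U V ξ G x n)ᶜ = A ∩ {ω | (ξ n ω,
      (fun i : shiftedBox d L (N * L) x => U i n ω), V x n ω) ∉
        openRule {ξc | memH d L x ξc} (G x n) θ} := by
    ext ω; simp [openSite, heven]
  rw [hA']
  exact measure_inter_not_mem_openRule_le (randSigma_le hmeas _) (randSigma_le hmeas _) hind
    (measurable_of_pastIdx_subset hF hξ0 hξrec (pastIdx_subset_compl_siteIdx x n))
    (measurable_noise_of_siteIdx_subset subset_rfl) (measurable_V_of_siteIdx_subset subset_rfl)
    hunif (measurableSet_memH d L x) hG hGprob hA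

end Construction

theorem spin_system_percolation_comparison_general
    {Ω : Type*} {m0 : MeasurableSpace Ω} (P : Measure Ω) [IsProbabilityMeasure P]
    {E : Type} [MeasurableSpace E]
    (d L N : ℕ) (hd : 0 < d) (hL : 0 < L)
    (θ : ℝ) (hθ : θ ∈ Set.Ioo (0 : ℝ) 1)
    (U : Site d → ℕ → Ω → E) (V : ℤ → ℕ → Ω → ℝ) (ξ0 : Ω → Site d → Bool)
    (hUmeas : ∀ i n, Measurable (U i n)) (hVmeas : ∀ x n, Measurable (V x n))
    (hξ0meas : Measurable ξ0)
    -- `U` is i.i.d., `V` is i.i.d. uniform on `[0,1]`, and `U`, `V`, `ξ₀` are mutually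
    -- independent:
    (hVunif : ∀ x n, P.map (V x n) = volume.restrict (Set.Icc (0 : ℝ) 1))
    (hindep : ProbabilityTheory.iIndepFun (m := randσ d E) (randf U V ξ0) P)
    -- the spin system, defined recursively from the noise by the measurable map `F`:
    (F : (Site d → Bool) → (Site d → E) → Site d → Bool)
    (hFmeas : Measurable fun q : (Site d → Bool) × (Site d → E) => F q.1 q.2)
    (ξ : ℕ → Ω → Site d → Bool)
    (hξ0 : ξ 0 = ξ0)
    (hξrec : ∀ n ω, ξ (n + 1) ω = F (ξ n ω) fun i => U i n ω)
    -- the good events `G_{m,n}`, for `(m,n) ∈ 𝓛`, with `B_m = (mLe₁ + [-NL,NL]^d) ∩ ℤ^d`: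
    (G : (m : ℤ) → ℕ → Set ((Site d → Bool) × (↥(shiftedBox d L ((N : ℝ) * L) m) → E)))
    (hGmeas : ∀ m n, MeasurableSet (G m n))
    (hGprob : ∀ (m : ℤ) (n : ℕ), Even (m + (n : ℤ)) →
      ∀ ξc : Site d → Bool, memH d L m ξc →
        ENNReal.ofReal (1 - θ) <
          P {ω | (ξc, fun i : ↥(shiftedBox d L ((N : ℝ) * L) m) => U ↑i n ω) ∈ G m n})
    (hGgood : ∀ (m : ℤ) (n : ℕ), Even (m + (n : ℤ)) →
      ∀ (ξc : Site d → Bool) (u : Site d → E), memH d L m ξc →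
        (ξc, fun i : ↥(shiftedBox d L ((N : ℝ) * L) m) => u ↑i) ∈ G m n →
        memH d L (m + 1) (F ξc u) ∧ memH d L (m - 1) (F ξc u)) :
    ∃ op : ℤ → ℕ → Set Ω,
      (∀ x n, MeasurableSet (op x n)) ∧
      TwoNDependentDensity P N θ op ∧
      ∀ᵐ ω ∂P, ∀ (n : ℕ) (y : ℤ),
        (∃ x : ℤ, (Even x ∧ memH d L x (ξ 0 ω)) ∧ Reaches op ω x 0 y n) →
        Even (y + (n : ℤ)) ∧ memH d L y (ξ n ω) := by
  have hmeas : ∀ j, @Measurable Ω (randβ d E j) m0 (randσ d E j) (randf U V ξ0 j) := by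
    rintro (⟨i, n⟩ | ⟨x, n⟩ | -)
    exacts [hUmeas i n, hVmeas x n, hξ0meas]
  refine ⟨openSite θ U V ξ G, fun x n => randSigma_le hmeas univ _
    (measurableSet_openSite hFmeas hξ0 hξrec θ (hGmeas x n) (subset_univ _)), ?_, ?_⟩
  · intro I hI hsep
    rw [ENNReal.ofReal_pow hθ.1.le]
    refine measure_biInter_le_pow_card P Prod.snd I
      (𝓖 := fun p => randSigma U V ξ0 (siteIdx d L N p.1 p.2)ᶜ) ?_ fun p hp A hA => ?_
    · intro p hp q hq hqp hqp_le
      exact (measurableSet_openSite hFmeas hξ0 hξrec θ (hGmeas q.1 q.2)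
        (pastIdx_union_siteIdx_subset_compl hd hL hqp hqp_le (hsep q hq p hp hqp))).compl
    · exact measure_inter_compl_openSite_le hmeas hindep hFmeas hξ0 hξrec (hI p hp)
        (hVunif p.1 p.2) (hGmeas p.1 p.2) (hGprob p.1 p.2 (hI p hp)) hA
  · exact ae_of_all P fun ω n y ⟨x, hx, hreach⟩ =>
      even_and_memH_of_reaches_openSite hξrec hGgood hx hreach

/-- Theorem 3.5 (classical case): comparison of a noise-driven spin system with
`2N`-dependent oriented percolation.  Under the comparison hypothesis for the "good
events" `G`, there are open-site variables on the same probability space, forming a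
`2N`-dependent family with density at least `1 - θ`, whose oriented percolation process
started from `W₀ = X₀` is dominated by the process `X_n = {m : ξ(n) ∈ m·H}`. -/
theorem spin_system_percolation_comparison
    {Ω : Type*} {m0 : MeasurableSpace Ω} (P : Measure Ω) [IsProbabilityMeasure P]
    {E : Type} [MeasurableSpace E]
    (d L N : ℕ) (hd : 0 < d) (hL : 0 < L) (hN : 0 < N)
    (θ : ℝ) (hθ : θ ∈ Set.Ioo (0 : ℝ) 1)
    (U : Site d → ℕ → Ω → E) (V : ℤ → ℕ → Ω → ℝ) (ξ0 : Ω → Site d → Bool)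
    (hUmeas : ∀ i n, Measurable (U i n)) (hVmeas : ∀ x n, Measurable (V x n))
    (hξ0meas : Measurable ξ0)
    -- `U` is i.i.d., `V` is i.i.d. uniform on `[0,1]`, and `U`, `V`, `ξ₀` are mutually
    -- independent:
    (hUiid : ∀ i n i' n', ProbabilityTheory.IdentDistrib (U i n) (U i' n') P P)
    (hVunif : ∀ x n, P.map (V x n) = volume.restrict (Set.Icc (0 : ℝ) 1))
    (hindep : ProbabilityTheory.iIndepFun (m := randσ d E) (randf U V ξ0) P)
    -- the spin system, defined recursively from the noise by the measurable map `F`: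
    (F : (Site d → Bool) → (Site d → E) → Site d → Bool)
    (hFmeas : Measurable fun q : (Site d → Bool) × (Site d → E) => F q.1 q.2)
    (ξ : ℕ → Ω → Site d → Bool)
    (hξ0 : ξ 0 = ξ0)
    (hξrec : ∀ n ω, ξ (n + 1) ω = F (ξ n ω) fun i => U i n ω)
    -- the good events `G_{m,n}`, for `(m,n) ∈ 𝓛`, with `B_m = (mLe₁ + [-NL,NL]^d) ∩ ℤ^d`:
    (G : (m : ℤ) → ℕ → Set ((Site d → Bool) × (↥(shiftedBox d L ((N : ℝ) * L) m) → E)))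
    (hGmeas : ∀ m n, MeasurableSet (G m n))
    (hGprob : ∀ (m : ℤ) (n : ℕ), Even (m + (n : ℤ)) →
      ∀ ξc : Site d → Bool, memH d L m ξc →
        ENNReal.ofReal (1 - θ) <
          P {ω | (ξc, fun i : ↥(shiftedBox d L ((N : ℝ) * L) m) => U ↑i n ω) ∈ G m n})
    (hGgood : ∀ (m : ℤ) (n : ℕ), Even (m + (n : ℤ)) →
      ∀ (ξc : Site d → Bool) (u : Site d → E), memH d L m ξc →
        (ξc, fun i : ↥(shiftedBox d L ((N : ℝ) * L) m) => u ↑i) ∈ G m n →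
        memH d L (m + 1) (F ξc u) ∧ memH d L (m - 1) (F ξc u)) :
    ∃ op : ℤ → ℕ → Set Ω,
      (∀ x n, MeasurableSet (op x n)) ∧
      TwoNDependentDensity P N θ op ∧
      ∀ᵐ ω ∂P, ∀ (n : ℕ) (y : ℤ),
        (∃ x : ℤ, (Even x ∧ memH d L x (ξ 0 ω)) ∧ Reaches op ω x 0 y n) →
        Even (y + (n : ℤ)) ∧ memH d L y (ξ n ω) :=
  spin_system_percolation_comparison_general (m0 := m0) P d L N hd hL θ hθ U V ξ0 hUmeas hVmeas
    hξ0meas hVunif hindep F hFmeas ξ hξ0 hξrec G hGmeas hGprob hGgood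

end
end
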